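/- arXiv:2402.07797 — 2 statements merged into one kernel-verified Lean document; each statement's English description precedes it below -/
import Mathlib

section
/- Let Φ be the multilinear extension of φ and suppose |φ(a)| ≤ Φ_max for every action profile a. Then for every x ∈ Δ^n the Hessian ∇²Φ(x) has spectral norm at most n·A_max·Φ_max; consequently the gradient ∇Φ is Lipschitz on Δ^n with constant n·A_max·Φ_max, i.e., Φ is (n·A_max·Φ_max)-smooth on Δ^n. -/
open scoped BigOperators

noncomputable section

/-- The probability simplex `Δ(A_i) ⊆ ℝ^{|A_i|}` with the Euclidean norm. -/
def simplex (k : ℕ) : Set (EuclideanSpace ℝ (Fin k)) :=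
  {x | (∀ j, 0 ≤ x j) ∧ ∑ j, x j = 1}

/-- The joint strategy space `ℝ^{|A_1|} × ⋯ × ℝ^{|A_n|}` with the Euclidean (ℓ²) norm. -/
abbrev Strat (n : ℕ) (A : Fin n → ℕ) := PiLp 2 fun i => EuclideanSpace ℝ (Fin (A i))

/-- The product of simplices `Δ^n = Δ(A_1) × ⋯ × Δ(A_n)`. -/
def prodSimplex (n : ℕ) (A : Fin n → ℕ) : Set (Strat n A) :=
  {x | ∀ i, x i ∈ simplex (A i)}

/-- The multilinear extension `Φ(x) = ∑_a φ(a) ∏_i x_i(a_i)` of `φ`. -/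
def pot (n : ℕ) (A : Fin n → ℕ) (φ : (∀ i, Fin (A i)) → ℝ) (x : Strat n A) : ℝ :=
  ∑ a : ∀ i, Fin (A i), φ a * ∏ i, x i (a i)

/-! The potential is the restriction of the multilinear map
`M(y) = ∑_a φ(a) ∏_i y_i(a_i)` on `∏_i ℝ^{A_i}`, so its Hessian at `x` is
`D²Φ(x)(u, v) = ∑_{i ≠ j} M(x with u_i in slot i and v_j in slot j)`.
Since `|M(w)| ≤ Φmax ∏_k ‖w_k‖₁` and every untouched slot of a point of `Δ^n` has `ℓ¹`-norm `1`,
the `(i, j)` term is at most `Φmax ‖u_i‖₁ ‖v_j‖₁`. Summing over all pairs and using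
`‖·‖₁ ≤ √Amax ‖·‖₂` on each block and Cauchy–Schwarz across the `n` blocks gives
`|D²Φ(x)(u, v)| ≤ n Amax Φmax ‖u‖ ‖v‖`. The mean value inequality on the convex set `Δ^n` then
turns this Hessian bound into the Lipschitz bound for `∇Φ`. -/

open Finset Function

theorem PiLp.sum_norm_le_sqrt_card_mul_norm {ι : Type*} [Fintype ι] {β : ι → Type*}
    [∀ i, SeminormedAddCommGroup (β i)] (x : PiLp 2 β) :
    ∑ i, ‖x i‖ ≤ √(Fintype.card ι) * ‖x‖ := by
  rw [← Real.sqrt_sq (norm_nonneg x), ← Real.sqrt_mul (Nat.cast_nonneg _),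
    PiLp.norm_sq_eq_of_L2]
  exact Real.le_sqrt_of_sq_le (by simpa using sq_sum_le_card_mul_sum_sq (s := univ) (f := (‖x ·‖)))

theorem prod_apply_update_update_le_mul {ι : Type*} [Fintype ι] [DecidableEq ι]
    {E : ι → Type*} {c : ∀ k, E k → ℝ} (hc : ∀ k y, 0 ≤ c k y) {x : ∀ k, E k}
    (hx : ∀ k, c k (x k) ≤ 1) {i j : ι} (hij : i ≠ j) (u : E i) (v : E j) :
    ∏ k, c k (update (update x i u) j v k) ≤ c i u * c j v := by
  simp only [apply_update c]
  rw [prod_update_of_mem (mem_univ j), prod_update_of_mem (by simpa using hij)]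
  calc c j v * (c i u * ∏ k ∈ (univ \ {j}) \ {i}, c k (x k)) ≤ c j v * c i u :=
        mul_le_mul_of_nonneg_left
          (mul_le_of_le_one_right (hc i u) (prod_le_one (fun k _ => hc _ _) fun k _ => hx k))
          (hc j v)
    _ = c i u * c j v := mul_comm _ _

theorem sum_embedding_fin_two_le {ι : Type*} [Fintype ι] [DecidableEq ι] {g : ι × ι → ℝ}
    (hg : ∀ p, 0 ≤ g p) : ∑ e : Fin 2 ↪ ι, g (e 0, e 1) ≤ ∑ p, g p :=
  calc ∑ e : Fin 2 ↪ ι, g (e 0, e 1)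
      = ∑ p : {(a, b) : ι × ι | a ≠ b}, g p :=
        Fintype.sum_equiv Embedding.twoEmbeddingEquiv _ _ fun _ => rfl
    _ ≤ ∑ p, g p := by
        rw [sum_set_coe]
        exact sum_le_univ_sum_of_nonneg hg

theorem ContinuousMultilinearMap.iteratedFDeriv_two_apply {𝕜 ι G : Type*} {E : ι → Type*}
    [NontriviallyNormedField 𝕜] [Fintype ι] [DecidableEq ι]
    [∀ i, NormedAddCommGroup (E i)] [∀ i, NormedSpace 𝕜 (E i)]
    [NormedAddCommGroup G] [NormedSpace 𝕜 G]
    (f : ContinuousMultilinearMap 𝕜 E G) (x : ∀ i, E i) (m : Fin 2 → ∀ i, E i) :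
    f.iteratedFDeriv 2 x m =
      ∑ e : Fin 2 ↪ ι, f (update (update x (e 0) (m 0 (e 0))) (e 1) (m 1 (e 1))) := by
  simp only [ContinuousMultilinearMap.iteratedFDeriv, _root_.sum_apply,
    iteratedFDerivComponent_apply]
  refine sum_congr rfl fun e _ => congrArg f (funext fun k => ?_)
  rcases eq_or_ne k (e 1) with rfl | h1
  · simp
  rcases eq_or_ne k (e 0) with rfl | h0
  · simp [h1]
  have hk : k ∉ Set.range e := by
    rintro ⟨l, rfl⟩
    fin_cases l <;> simp_all
  simp [hk, h0, h1]

theorem lipschitzOnWith_gradient_of_norm_iteratedFDeriv_two_le {E : Type*}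
    [NormedAddCommGroup E] [InnerProductSpace ℝ E] [CompleteSpace E] {f : E → ℝ} {s : Set E}
    {C : ℝ} (hf : ContDiff ℝ 2 f) (hs : Convex ℝ s)
    (hC : ∀ x ∈ s, ‖iteratedFDeriv ℝ 2 f x‖ ≤ C) :
    LipschitzOnWith C.toNNReal (gradient f) s := by
  have hf' : Differentiable ℝ (fderiv ℝ f) :=
    (hf.fderiv_right (m := 1) le_rfl).differentiable one_ne_zero
  have hLip : LipschitzOnWith C.toNNReal (fderiv ℝ f) s := by
    refine hs.lipschitzOnWith_of_nnnorm_fderiv_le (fun x _ => hf' x) fun x hx => ?_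
    rw [← NNReal.coe_le_coe, coe_nnnorm, ← norm_iteratedFDeriv_one, norm_iteratedFDeriv_fderiv]
    exact (hC x hx).trans (Real.le_coe_toNNReal C)
  have := (InnerProductSpace.toDual ℝ E).symm.lipschitz.comp_lipschitzOnWith hLip
  rwa [one_mul] at this

section MultilinearExtension

variable {ι : Type*} [Fintype ι] [DecidableEq ι] {κ : ι → Type*} [∀ i, Fintype (κ i)]

def multilinearExtension (φ : (∀ i, κ i) → ℝ) :
    ContinuousMultilinearMap ℝ (fun i => EuclideanSpace ℝ (κ i)) ℝ :=
  ∑ a, φ a • (ContinuousMultilinearMap.mkPiAlgebra ℝ ι ℝ).compContinuousLinearMap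
    fun i => EuclideanSpace.proj (a i)

theorem multilinearExtension_apply (φ : (∀ i, κ i) → ℝ) (y : ∀ i, EuclideanSpace ℝ (κ i)) :
    multilinearExtension φ y = ∑ a, φ a * ∏ i, y i (a i) := by
  simp [multilinearExtension]

theorem abs_multilinearExtension_le {φ : (∀ i, κ i) → ℝ} {C : ℝ} (hφ : ∀ a, |φ a| ≤ C)
    (y : ∀ i, EuclideanSpace ℝ (κ i)) :
    |multilinearExtension φ y| ≤ C * ∏ i, ∑ α, |y i α| := by
  rw [multilinearExtension_apply, prod_univ_sum, ← Fintype.piFinset_univ, mul_sum]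
  refine (abs_sum_le_sum_abs _ _).trans (sum_le_sum fun a _ => ?_)
  rw [abs_mul, abs_prod]
  exact mul_le_mul_of_nonneg_right (hφ a) (prod_nonneg fun _ _ => abs_nonneg _)

theorem abs_iteratedFDeriv_two_multilinearExtension_le {φ : (∀ i, κ i) → ℝ} {C : ℝ}
    (hC : 0 ≤ C) (hφ : ∀ a, |φ a| ≤ C) {x : ∀ i, EuclideanSpace ℝ (κ i)}
    (hx : ∀ i, ∑ α, |x i α| ≤ 1) (m : Fin 2 → ∀ i, EuclideanSpace ℝ (κ i)) :
    |(multilinearExtension φ).iteratedFDeriv 2 x m|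
      ≤ C * (∑ i, ∑ α, |m 0 i α|) * ∑ j, ∑ β, |m 1 j β| := by
  set ℓ₁ : ∀ i, EuclideanSpace ℝ (κ i) → ℝ := fun i u => ∑ α, |u α|
  have hterm (e : Fin 2 ↪ ι) :
      |multilinearExtension φ (update (update x (e 0) (m 0 (e 0))) (e 1) (m 1 (e 1)))|
        ≤ C * (ℓ₁ _ (m 0 (e 0)) * ℓ₁ _ (m 1 (e 1))) := by
    refine (abs_multilinearExtension_le hφ _).trans (mul_le_mul_of_nonneg_left ?_ hC)
    exact prod_apply_update_update_le_mul (c := ℓ₁) (fun _ _ => sum_nonneg fun _ _ => abs_nonneg _)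
      hx (e.injective.ne zero_ne_one) _ _
  rw [ContinuousMultilinearMap.iteratedFDeriv_two_apply]
  calc _ ≤ ∑ e : Fin 2 ↪ ι, C * (ℓ₁ _ (m 0 (e 0)) * ℓ₁ _ (m 1 (e 1))) :=
        (abs_sum_le_sum_abs _ _).trans (sum_le_sum fun e _ => hterm e)
    _ ≤ ∑ p : ι × ι, C * (ℓ₁ _ (m 0 p.1) * ℓ₁ _ (m 1 p.2)) :=
        sum_embedding_fin_two_le (g := fun p => C * (ℓ₁ _ (m 0 p.1) * ℓ₁ _ (m 1 p.2)))
          fun _ => by positivity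
    _ = C * (∑ i, ℓ₁ _ (m 0 i)) * ∑ j, ℓ₁ _ (m 1 j) := by
        rw [Fintype.sum_prod_type, mul_assoc, sum_mul_sum, mul_sum]
        simp only [mul_sum]

end MultilinearExtension

section Potential

variable {n : ℕ} {A : Fin n → ℕ}

theorem convex_simplex (k : ℕ) : Convex ℝ (simplex k) :=
  (convex_stdSimplex ℝ (Fin k)).linear_preimage (WithLp.linearEquiv 2 ℝ (Fin k → ℝ)).toLinearMap

theorem convex_prodSimplex : Convex ℝ (prodSimplex n A) := by
  rw [prodSimplex, Set.ofPred_forall]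
  exact convex_iInter fun i => (convex_simplex (A i)).linear_preimage
    (PiLp.projₗ 2 (fun i => EuclideanSpace ℝ (Fin (A i))) i)

theorem pos_of_mem_simplex {k : ℕ} {u : EuclideanSpace ℝ (Fin k)} (hu : u ∈ simplex k) : 0 < k :=
  Nat.pos_of_ne_zero fun hk => by subst hk; simpa using hu.2

theorem sum_abs_eq_one_of_mem_simplex {k : ℕ} {u : EuclideanSpace ℝ (Fin k)} (hu : u ∈ simplex k) :
    ∑ α, |u α| = 1 := by
  rw [← hu.2]
  exact sum_congr rfl fun α _ => abs_of_nonneg (hu.1 α)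

theorem sum_sum_abs_le_sqrt_mul_sqrt_mul_norm {Amax : ℕ} (hA : ∀ i, A i ≤ Amax) (y : Strat n A) :
    ∑ i, ∑ α, |y i α| ≤ √Amax * √n * ‖y‖ := by
  calc ∑ i, ∑ α, |y i α| ≤ ∑ i, √Amax * ‖y i‖ := sum_le_sum fun i _ => by
        simpa using (PiLp.sum_norm_le_sqrt_card_mul_norm (y i)).trans
          (by rw [Fintype.card_fin]; gcongr; exact_mod_cast hA i)
    _ ≤ √Amax * √n * ‖y‖ := by
        rw [← mul_sum, mul_assoc]
        gcongr
        simpa using PiLp.sum_norm_le_sqrt_card_mul_norm y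

theorem pot_eq_multilinearExtension_comp (φ : (∀ i, Fin (A i)) → ℝ) :
    pot n A φ = multilinearExtension φ ∘
      ((PiLp.continuousLinearEquiv 2 ℝ fun i => EuclideanSpace ℝ (Fin (A i))) :
        Strat n A →L[ℝ] ∀ i, EuclideanSpace ℝ (Fin (A i))) := by
  ext x
  simp [pot, multilinearExtension_apply]

theorem contDiff_pot (φ : (∀ i, Fin (A i)) → ℝ) : ContDiff ℝ ⊤ (pot n A φ) := by
  rw [pot_eq_multilinearExtension_comp]
  exact (multilinearExtension φ).contDiff.comp (ContinuousLinearMap.contDiff _)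

theorem iteratedFDeriv_pot_apply (φ : (∀ i, Fin (A i)) → ℝ) (k : ℕ) (x : Strat n A)
    (m : Fin k → Strat n A) :
    iteratedFDeriv ℝ k (pot n A φ) x m =
      (multilinearExtension φ).iteratedFDeriv k (WithLp.ofLp x) fun l => WithLp.ofLp (m l) := by
  rw [pot_eq_multilinearExtension_comp, ContinuousLinearMap.iteratedFDeriv_comp_right _
    (multilinearExtension φ).contDiff x le_top, ContinuousMultilinearMap.iteratedFDeriv_eq]
  rfl

theorem norm_iteratedFDeriv_two_pot_le {φ : (∀ i, Fin (A i)) → ℝ} {Φmax : ℝ}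
    (hφ : ∀ a, |φ a| ≤ Φmax) {Amax : ℕ} (hA : ∀ i, A i ≤ Amax) {x : Strat n A}
    (hx : x ∈ prodSimplex n A) :
    ‖iteratedFDeriv ℝ 2 (pot n A φ) x‖ ≤ n * Amax * Φmax := by
  have hΦ : 0 ≤ Φmax := (abs_nonneg _).trans (hφ fun i => ⟨0, pos_of_mem_simplex (hx i)⟩)
  refine ContinuousMultilinearMap.opNorm_le_bound (by positivity) fun m => ?_
  rw [iteratedFDeriv_pot_apply, Real.norm_eq_abs, Fin.prod_univ_two]
  have hx₁ : ∀ i, ∑ α, |x i α| ≤ 1 := fun i => (sum_abs_eq_one_of_mem_simplex (hx i)).le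
  calc _ ≤ Φmax * (∑ i, ∑ α, |m 0 i α|) * ∑ j, ∑ β, |m 1 j β| :=
        abs_iteratedFDeriv_two_multilinearExtension_le hΦ hφ hx₁ fun l => WithLp.ofLp (m l)
    _ ≤ Φmax * (√Amax * √n * ‖m 0‖) * (√Amax * √n * ‖m 1‖) := by
        gcongr <;> exact sum_sum_abs_le_sqrt_mul_sqrt_mul_norm hA _
    _ = Φmax * (√Amax ^ 2 * √n ^ 2) * (‖m 0‖ * ‖m 1‖) := by ring
    _ = n * Amax * Φmax * (‖m 0‖ * ‖m 1‖) := by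
        rw [Real.sq_sqrt (Nat.cast_nonneg _), Real.sq_sqrt (Nat.cast_nonneg _)]
        ring

end Potential

/-- **Smoothness of the potential.**  If `|φ(a)| ≤ Φmax` for every action profile `a` and
`|A_i| ≤ Amax` for every player, then at every `x ∈ Δ^n` the Hessian of the multilinear
extension `Φ` has spectral norm (norm as a bilinear form) at most `n·Amax·Φmax`, and
consequently the gradient `∇Φ` is Lipschitz on `Δ^n` with constant `n·Amax·Φmax`,
i.e. `Φ` is `(n·Amax·Φmax)`-smooth on `Δ^n`. -/
theorem potential_smooth (n : ℕ) (A : Fin n → ℕ) (φ : (∀ i, Fin (A i)) → ℝ)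
    (Φmax : ℝ) (hφ : ∀ a, |φ a| ≤ Φmax)
    (Amax : ℕ) (hA : ∀ i, A i ≤ Amax) :
    (∀ x ∈ prodSimplex n A,
      ‖iteratedFDeriv ℝ 2 (pot n A φ) x‖ ≤ (n : ℝ) * Amax * Φmax) ∧
    LipschitzOnWith ((n : ℝ) * Amax * Φmax).toNNReal
      (gradient (pot n A φ)) (prodSimplex n A) := by
  have hHess : ∀ x ∈ prodSimplex n A, ‖iteratedFDeriv ℝ 2 (pot n A φ) x‖ ≤ n * Amax * Φmax :=
    fun _ hx => norm_iteratedFDeriv_two_pot_le hφ hA hx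
  exact ⟨hHess, lipschitzOnWith_gradient_of_norm_iteratedFDeriv_two_le
    ((contDiff_pot φ).of_le le_top) convex_prodSimplex hHess⟩
end
end

section
/- Let C ⊆ ℝ^k be nonempty, closed, and convex, and let f : ℝ^k → ℝ be differentiable with β-Lipschitz gradient. For η > 0 define the gradient mapping G^η(x) := (1/η)·( x − P_C(x − η∇f(x)) ), where P_C denotes the Euclidean metric projection onto C, and set x⁺ := x − η·G^η(x) = P_C(x − η∇f(x)). If ‖G^η(x)‖₂ ≤ ε, then −min{ δᵀ∇f(x⁺) : x⁺ + δ ∈ C, ‖δ‖₂ ≤ 1 } ≤ ε(ηβ + 1). -/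
open scoped RealInnerProductSpace

/-- **From a small gradient mapping to approximate first-order stationarity.**
Let `C ⊆ ℝ^k` be nonempty, closed and convex, `f : ℝ^k → ℝ` differentiable with
`β`-Lipschitz gradient, and let `P` be the Euclidean metric projection onto `C`.
For `η > 0` define the gradient mapping `G^η(x) = (1/η)(x − P(x − η∇f(x)))` and
`x⁺ = x − η G^η(x) = P(x − η∇f(x))`.  If `‖G^η(x)‖₂ ≤ ε`, then every feasible unit
direction `δ` (i.e. `x⁺ + δ ∈ C`, `‖δ‖₂ ≤ 1`) satisfies `δᵀ∇f(x⁺) ≥ −ε(ηβ + 1)`,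
i.e. `−min δᵀ∇f(x⁺) ≤ ε(ηβ + 1)`. -/
theorem gradient_mapping_small_implies_approx_stationary
    (k : ℕ) (C : Set (EuclideanSpace ℝ (Fin k)))
    (hCne : C.Nonempty) (hCclosed : IsClosed C) (hCconv : Convex ℝ C)
    (f : EuclideanSpace ℝ (Fin k) → ℝ) (β : ℝ) (hβ : 0 ≤ β)
    (hdiff : Differentiable ℝ f)
    (hlip : LipschitzWith β.toNNReal (gradient f))
    (P : EuclideanSpace ℝ (Fin k) → EuclideanSpace ℝ (Fin k))
    (hP : ∀ z, P z ∈ C ∧ ∀ y ∈ C, ‖z - P z‖ ≤ ‖z - y‖)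
    (η ε : ℝ) (hη : 0 < η) (x : EuclideanSpace ℝ (Fin k))
    (hG : ‖(1 / η) • (x - P (x - η • gradient f x))‖ ≤ ε) :
    ∀ δ : EuclideanSpace ℝ (Fin k),
      P (x - η • gradient f x) + δ ∈ C → ‖δ‖ ≤ 1 →
        -(ε * (η * β + 1)) ≤ ⟪δ, gradient f (P (x - η • gradient f x))⟫ := by

  intro d hmem hd1
  set z := x - η • gradient f x with hz
  set p := P z with hp
  have hεnn : 0 ≤ ε := le_trans (norm_nonneg _) hG
  have hpC : p ∈ C := (hP z).1
  haveI : Nonempty C := hCne.to_subtype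
  have hinf : ‖z - p‖ = ⨅ w : C, ‖z - w‖ := by
    apply le_antisymm
    · exact le_ciInf fun w => (hP z).2 w w.2
    · exact ciInf_le ⟨0, Set.forall_mem_range.2 fun w => norm_nonneg _⟩ (⟨p, hpC⟩ : C)
  have hproj : ∀ w ∈ C, ⟪z - p, w - p⟫ ≤ 0 :=
    (norm_eq_iInf_iff_real_inner_le_zero hCconv hpC).1 hinf
  have h1 : ⟪z - p, d⟫ ≤ 0 := by
    have := hproj (p + d) hmem
    simpa using this
  have hxp : ‖x - p‖ ≤ η * ε := by
    have h := hG
    rw [norm_smul, Real.norm_eq_abs, abs_of_pos (by positivity : (0:ℝ) < 1/η)] at h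
    have hne : η ≠ 0 := ne_of_gt hη
    calc ‖x - p‖ = η * ((1/η) * ‖x - p‖) := by field_simp
      _ ≤ η * ε := by nlinarith [norm_nonneg (x - p)]
  have h2 : ⟪x - p, d⟫ - η * ⟪gradient f x, d⟫ ≤ 0 := by
    have hzp : z - p = (x - p) - η • gradient f x := by rw [hz]; abel
    rw [hzp, inner_sub_left, real_inner_smul_left] at h1
    linarith
  have hcs1 : |⟪x - p, d⟫| ≤ η * ε := by
    calc |⟪x - p, d⟫| ≤ ‖x - p‖ * ‖d‖ := abs_real_inner_le_norm _ _
      _ ≤ (η * ε) * 1 := mul_le_mul hxp hd1 (norm_nonneg _) (by positivity)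
      _ = η * ε := mul_one _
  have h3 : -ε ≤ ⟪gradient f x, d⟫ := by
    have h4 : -(η * ε) ≤ ⟪x - p, d⟫ := (abs_le.1 hcs1).1
    nlinarith
  have hlipb : ‖gradient f p - gradient f x‖ ≤ β * (η * ε) := by
    have := hlip.dist_le_mul p x
    rw [Real.coe_toNNReal β hβ, dist_eq_norm, dist_eq_norm] at this
    have hrev : ‖p - x‖ = ‖x - p‖ := norm_sub_rev _ _
    calc ‖gradient f p - gradient f x‖ ≤ β * ‖p - x‖ := this
      _ ≤ β * (η * ε) := by rw [hrev]; exact mul_le_mul_of_nonneg_left hxp hβ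
  have hcs2 : |⟪d, gradient f p - gradient f x⟫| ≤ β * (η * ε) := by
    calc |⟪d, gradient f p - gradient f x⟫| ≤ ‖d‖ * ‖gradient f p - gradient f x‖ :=
          abs_real_inner_le_norm _ _
      _ ≤ 1 * (β * (η * ε)) :=
          mul_le_mul hd1 hlipb (norm_nonneg _) zero_le_one
      _ = β * (η * ε) := one_mul _
  have hsplit : ⟪d, gradient f p⟫ = ⟪gradient f x, d⟫ + ⟪d, gradient f p - gradient f x⟫ := by
    rw [inner_sub_right, real_inner_comm d (gradient f x)]
    ring
  have h5 := (abs_le.1 hcs2).1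
  rw [hsplit]
  nlinarith
end
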